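/- Let P be a connected finite poset on n elements. Every permutation of {1,...,n} is descent-compatible with P if and only if P is a rooted tree. -/

import Mathlib

/-- `b` covers `a` in the partial order `r`. -/
def CovR {n : ℕ} (r : Fin n → Fin n → Prop) (a b : Fin n) : Prop :=
  r a b ∧ a ≠ b ∧ ∀ c, r a c → r c b → c = a ∨ c = b

/-- `a` is a minimal element of the partial order `r`. -/
def MinR {n : ℕ} (r : Fin n → Fin n → Prop) (a : Fin n) : Prop :=
  ∀ b, r b a → b = a

/-- `c` is a saturated chain in `P̂` from `0̂` to `a`. -/
def IsSatChain {n : ℕ} (r : Fin n → Fin n → Prop) (k : ℕ)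
    (c : Fin (k + 1) → Fin n) (a : Fin n) : Prop :=
  MinR r (c 0) ∧ (∀ i : Fin k, CovR r (c i.castSucc) (c i.succ)) ∧ c (Fin.last k) = a

/-- The number of descents of `τ` along the saturated chain `c`. -/
def desAlong {n : ℕ} (τ : Equiv.Perm (Fin n)) (k : ℕ) (c : Fin (k + 1) → Fin n) : ℕ :=
  (Finset.univ.filter fun i : Fin k => τ (c i.succ) < τ (c i.castSucc)).card

/-- `τ` is descent-compatible with the poset `r`. -/
def DescentCompatible {n : ℕ} (r : Fin n → Fin n → Prop) (τ : Equiv.Perm (Fin n)) : Prop :=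
  ∀ a : Fin n, ∀ (k₁ k₂ : ℕ) (c₁ : Fin (k₁ + 1) → Fin n) (c₂ : Fin (k₂ + 1) → Fin n),
    IsSatChain r k₁ c₁ a → IsSatChain r k₂ c₂ a →
      desAlong τ k₁ c₁ = desAlong τ k₂ c₂

/-! Along a saturated chain the labels increase, since `P` is naturally labeled. If `b` covers
`a₁ < a₂`, extend saturated chains to `a₁` and to `a₂` by `b`, and let `τ` swap `a₂` and `b`: the
first chain keeps no descent, while the second acquires one at its last step. Conversely, if lower
covers are unique, a saturated chain from `0̂` to `a` can be reconstructed backwards from `a`, so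
there is only one. -/

section SaturatedChain

variable {n : ℕ} {r : Fin n → Fin n → Prop}

theorem CovR.lt (hnat : ∀ a b, r a b → a ≤ b) {a b : Fin n} (h : CovR r a b) : a < b :=
  lt_of_le_of_ne (hnat a b h.1) h.2.1

theorem CovR.not_minR {a b : Fin n} (h : CovR r a b) : ¬ MinR r b :=
  fun hb => h.2.1 (hb a h.1)

theorem exists_covR_of_not_minR (hnat : ∀ a b, r a b → a ≤ b) {b : Fin n} (hb : ¬ MinR r b) :
    ∃ a, CovR r a b := by
  classical
  obtain ⟨x, hxb, hxne⟩ : ∃ x, r x b ∧ x ≠ b := by simpa [MinR] using hb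
  obtain ⟨a, ha, hmax⟩ := (Finset.univ.filter fun y => r y b ∧ y ≠ b).exists_max_image id
    ⟨x, by simp [hxb, hxne]⟩
  simp only [Finset.mem_filter, Finset.mem_univ, true_and, id] at ha hmax
  refine ⟨a, ha.1, ha.2, fun c hac hcb => or_iff_not_imp_right.2 fun hc => ?_⟩
  exact le_antisymm (hmax c ⟨hcb, hc⟩) (hnat a c hac)

theorem IsSatChain.monotone (hnat : ∀ a b, r a b → a ≤ b) {k : ℕ} {c : Fin (k + 1) → Fin n}
    {a : Fin n} (hc : IsSatChain r k c a) : Monotone c :=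
  Fin.monotone_iff_le_succ.2 fun i => hnat _ _ (hc.2.1 i).1

theorem IsSatChain.le (hnat : ∀ a b, r a b → a ≤ b) {k : ℕ} {c : Fin (k + 1) → Fin n}
    {a : Fin n} (hc : IsSatChain r k c a) (i : Fin (k + 1)) : c i ≤ a :=
  hc.2.2 ▸ hc.monotone hnat (Fin.le_last i)

theorem IsSatChain.minR_of_zero {c : Fin 1 → Fin n} {a : Fin n} (hc : IsSatChain r 0 c a) :
    MinR r a :=
  hc.2.2 ▸ hc.1

theorem IsSatChain.snoc {k : ℕ} {c : Fin (k + 1) → Fin n} {a b : Fin n}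
    (hc : IsSatChain r k c a) (hab : CovR r a b) : IsSatChain r (k + 1) (Fin.snoc c b) b := by
  refine ⟨by rw [← Fin.castSucc_zero, Fin.snoc_castSucc]; exact hc.1, fun i => ?_, by simp⟩
  induction i using Fin.lastCases with
  | last => simpa [Fin.succ_last, hc.2.2] using hab
  | cast j => simpa only [Fin.succ_castSucc, Fin.snoc_castSucc] using hc.2.1 j

theorem IsSatChain.init {k : ℕ} {c : Fin (k + 2) → Fin n} {a : Fin n}
    (hc : IsSatChain r (k + 1) c a) :
    IsSatChain r k (Fin.init c) (c (Fin.last k).castSucc) :=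
  ⟨hc.1, fun i => by simpa only [Fin.init, Fin.succ_castSucc] using hc.2.1 i.castSucc, rfl⟩

theorem IsSatChain.covR_last {k : ℕ} {c : Fin (k + 2) → Fin n} {a : Fin n}
    (hc : IsSatChain r (k + 1) c a) : CovR r (c (Fin.last k).castSucc) a := by
  simpa [Fin.succ_last, hc.2.2] using hc.2.1 (Fin.last k)

theorem exists_isSatChain (hnat : ∀ a b, r a b → a ≤ b) (a : Fin n) :
    ∃ k, ∃ c : Fin (k + 1) → Fin n, IsSatChain r k c a := by
  induction a using WellFoundedLT.induction with
  | _ a ih =>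
    by_cases ha : MinR r a
    · exact ⟨0, fun _ => a, ha, fun i => i.elim0, rfl⟩
    · obtain ⟨p, hp⟩ := exists_covR_of_not_minR hnat ha
      obtain ⟨k, c, hc⟩ := ih p (hp.lt hnat)
      exact ⟨k + 1, _, hc.snoc hp⟩

theorem IsSatChain.sigma_eq (htree : ∀ b, MinR r b ∨ ∃! a, CovR r a b) {a : Fin n}
    {k₁ k₂ : ℕ} {c₁ : Fin (k₁ + 1) → Fin n} {c₂ : Fin (k₂ + 1) → Fin n}
    (h₁ : IsSatChain r k₁ c₁ a) (h₂ : IsSatChain r k₂ c₂ a) :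
    (⟨k₁, c₁⟩ : Σ k, Fin (k + 1) → Fin n) = ⟨k₂, c₂⟩ := by
  induction k₁ generalizing a k₂ with
  | zero =>
    cases k₂ with
    | zero =>
      congr 1
      funext i
      rw [show i = Fin.last 0 from Fin.ext (Nat.lt_one_iff.1 i.2), h₁.2.2, h₂.2.2]
    | succ m => exact absurd h₁.minR_of_zero h₂.covR_last.not_minR
  | succ m ih =>
    cases k₂ with
    | zero => exact absurd h₂.minR_of_zero h₁.covR_last.not_minR
    | succ m' =>
      have hp : c₂ (Fin.last m').castSucc = c₁ (Fin.last m).castSucc :=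
        ((htree a).resolve_left h₁.covR_last.not_minR).unique h₂.covR_last h₁.covR_last
      obtain ⟨rfl, hinit⟩ := Sigma.mk.inj_iff.1 (ih h₁.init (hp ▸ h₂.init))
      rw [← Fin.snoc_init_self c₁, ← Fin.snoc_init_self c₂, eq_of_heq hinit, h₁.2.2, h₂.2.2]

end SaturatedChain

section Descents

variable {n : ℕ}

theorem desAlong_snoc (τ : Equiv.Perm (Fin n)) {k : ℕ} (c : Fin (k + 1) → Fin n) (b : Fin n) :
    desAlong τ (k + 1) (Fin.snoc c b) =
      desAlong τ k c + if τ b < τ (c (Fin.last k)) then 1 else 0 := by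
  simp only [desAlong, Finset.card_filter, Fin.sum_univ_castSucc, Fin.snoc_castSucc,
    Fin.succ_castSucc, Fin.succ_last, Fin.snoc_last]

theorem desAlong_eq_zero_of_monotone {τ : Equiv.Perm (Fin n)} {k : ℕ} {c : Fin (k + 1) → Fin n}
    (h : Monotone (τ ∘ c)) : desAlong τ k c = 0 := by
  simp only [desAlong, Finset.card_eq_zero, Finset.filter_eq_empty_iff, not_lt]
  exact fun i _ => Fin.monotone_iff_le_succ.1 h i

variable {r : Fin n → Fin n → Prop}

theorem not_descentCompatible_swap (hnat : ∀ a b, r a b → a ≤ b) {a₁ a₂ b : Fin n}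
    (h₁ : CovR r a₁ b) (h₂ : CovR r a₂ b) (hlt : a₁ < a₂) :
    ¬ DescentCompatible r (Equiv.swap a₂ b) := by
  intro H
  obtain ⟨k₁, c₁, hc₁⟩ := exists_isSatChain hnat a₁
  obtain ⟨k₂, c₂, hc₂⟩ := exists_isSatChain hnat a₂
  have hb : a₂ < b := h₂.lt hnat
  have hfix : ∀ i, Equiv.swap a₂ b (c₁ i) = c₁ i := fun i =>
    have := (hc₁.le hnat i).trans_lt hlt
    Equiv.swap_apply_of_ne_of_ne this.ne (this.trans hb).ne
  have hd₁ : desAlong (Equiv.swap a₂ b) (k₁ + 1) (Fin.snoc c₁ b) = 0 := by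
    have hmono : Monotone (Equiv.swap a₂ b ∘ c₁) := by
      simpa only [Function.comp_def, hfix] using hc₁.monotone hnat
    rw [desAlong_snoc, desAlong_eq_zero_of_monotone hmono, hfix, hc₁.2.2, Equiv.swap_apply_right]
    simp [hlt.le]
  have hd₂ : 1 ≤ desAlong (Equiv.swap a₂ b) (k₂ + 1) (Fin.snoc c₂ b) := by
    rw [desAlong_snoc, hc₂.2.2, Equiv.swap_apply_right, Equiv.swap_apply_left]
    simp [hb]
  have := H b _ _ _ _ (hc₁.snoc h₁) (hc₂.snoc h₂)
  omega

theorem eq_of_covR_of_forall_descentCompatible (hnat : ∀ a b, r a b → a ≤ b)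
    (H : ∀ τ : Equiv.Perm (Fin n), DescentCompatible r τ) {a₁ a₂ b : Fin n}
    (h₁ : CovR r a₁ b) (h₂ : CovR r a₂ b) : a₁ = a₂ := by
  rcases lt_trichotomy a₁ a₂ with hlt | heq | hgt
  · exact absurd (H _) (not_descentCompatible_swap hnat h₁ h₂ hlt)
  · exact heq
  · exact absurd (H _) (not_descentCompatible_swap hnat h₂ h₁ hgt)

theorem descentCompatible_of_unique_covR (htree : ∀ b, MinR r b ∨ ∃! a, CovR r a b)
    (τ : Equiv.Perm (Fin n)) : DescentCompatible r τ :=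
  fun _ _ _ _ _ h₁ h₂ => congrArg (fun s => desAlong τ s.1 s.2) (h₁.sigma_eq htree h₂)

end Descents

theorem all_descent_compatible_iff_rooted_tree_general {n : ℕ} (r : Fin n → Fin n → Prop)
    (hnat : ∀ a b, r a b → a ≤ b) :
    (∀ τ : Equiv.Perm (Fin n), DescentCompatible r τ) ↔
      (∀ b : Fin n, MinR r b ∨ ∃! a : Fin n, CovR r a b) := by
  refine ⟨fun H b => or_iff_not_imp_left.2 fun hb => ?_, descentCompatible_of_unique_covR⟩
  obtain ⟨a, ha⟩ := exists_covR_of_not_minR hnat hb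
  exact ⟨a, ha, fun a' ha' => eq_of_covR_of_forall_descentCompatible hnat H ha' ha⟩

/-- For a connected naturally labeled poset on `Fin n`, all permutations are
descent-compatible iff `P` is a rooted tree, i.e. every element is minimal
(unique parent `0̂` in `P̂`) or has a unique lower cover in `P`. -/
theorem all_descent_compatible_iff_rooted_tree {n : ℕ} (r : Fin n → Fin n → Prop)
    (hrefl : ∀ a, r a a) (hantisymm : ∀ a b, r a b → r b a → a = b)
    (htrans : ∀ a b c, r a b → r b c → r a c)
    (hnat : ∀ a b, r a b → a ≤ b)
    (hconn : ∀ a b : Fin n, Relation.ReflTransGen (fun x y => r x y ∨ r y x) a b) :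
    (∀ τ : Equiv.Perm (Fin n), DescentCompatible r τ) ↔
      (∀ b : Fin n, MinR r b ∨ ∃! a : Fin n, CovR r a b) :=
  all_descent_compatible_iff_rooted_tree_general r hnat
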